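/- Let X be a differentiable family of Hermitian rank-1 projectors projecting onto a differentiable nonvanishing vector x(ξ₊,ξ₋). Then x is holomorphic up to scaling (i.e., ∂₋(c·x) = 0 for some nonvanishing scalar function c) if and only if ∂₋x is pointwise proportional to x. -/

import Mathlib

open Matrix

/-- Entrywise partial derivative of a vector family in the first real coordinate. -/
noncomputable def vpd1 {N : ℕ} (f : ℝ × ℝ → Fin N → ℂ) (p : ℝ × ℝ) : Fin N → ℂ :=
  fun i => fderiv ℝ (fun q => f q i) p (1, 0)

/-- Entrywise partial derivative of a vector family in the second real coordinate. -/
noncomputable def vpd2 {N : ℕ} (f : ℝ × ℝ → Fin N → ℂ) (p : ℝ × ℝ) : Fin N → ℂ :=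
  fun i => fderiv ℝ (fun q => f q i) p (0, 1)

/-- `∂₋ = (∂₁ + i∂₂)/2` for vector families. -/
noncomputable def vpdm {N : ℕ} (f : ℝ × ℝ → Fin N → ℂ) (p : ℝ × ℝ) : Fin N → ℂ :=
  ((1 : ℂ) / 2) • (vpd1 f p + Complex.I • vpd2 f p)

/-!
If `c • x` is holomorphic, the Leibniz rule for `∂̄` gives `∂̄x = -(∂̄c / c) x`. Conversely, if
`∂̄x = k x`, then `f / x_j` is holomorphic wherever `x_j ≠ 0` for every `f` with `∂̄f = k f`; in
particular all ratios `x_i / x_j` are. The scalar `S = ∑ conj (x_i 0) x_i` satisfies `∂̄S = k S`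
and `S 0 ≠ 0`, so locally `S` is a holomorphic function times a nonvanishing one; by the identity
theorem and connectedness of `ℂ` its zeros are isolated and have finite multiplicities. A
Weierstrass canonical product `W` has exactly these zeros, and `c = W / S` extends across them to a
real-differentiable nonvanishing function with `c • x` holomorphic.
-/

open Complex Filter Topology Metric Set

theorem DifferentiableAt.div_normedField {𝕜 𝕜' E : Type*} [NontriviallyNormedField 𝕜]
    [NormedField 𝕜'] [NormedAlgebra 𝕜 𝕜'] [NormedAddCommGroup E] [NormedSpace 𝕜 E]
    {f g : E → 𝕜'} {x : E} (hf : DifferentiableAt 𝕜 f x) (hg : DifferentiableAt 𝕜 g x)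
    (hx : g x ≠ 0) : DifferentiableAt 𝕜 (fun y => f y / g y) x := by
  simpa only [div_eq_mul_inv] using hf.fun_mul (hg.fun_inv hx)

theorem analyticOrderAt_finsetProd {ι : Type*} {s : Finset ι} {f : ι → ℂ → ℂ} {z : ℂ}
    (hf : ∀ i ∈ s, AnalyticAt ℂ (f i) z) :
    analyticOrderAt (fun w => ∏ i ∈ s, f i w) z = ∑ i ∈ s, analyticOrderAt (f i) z := by
  classical
  induction s using Finset.induction_on with
  | empty => simp [analyticOrderAt_eq_zero]
  | insert i s hi ih =>
    simp_rw [Finset.prod_insert hi, Finset.sum_insert hi]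
    rw [← ih fun j hj => hf j (Finset.mem_insert_of_mem hj), ← analyticOrderAt_mul
      (hf i (Finset.mem_insert_self i s))
      (s.analyticAt_fun_prod fun j hj => hf j (Finset.mem_insert_of_mem hj))]
    rfl

theorem analyticOrderAt_pow_id (n : ℕ) (z₀ : ℂ) :
    analyticOrderAt (fun z : ℂ => z ^ n) z₀ = if z₀ = 0 then n else 0 := by
  split_ifs with h
  · subst h
    exact (analyticAt_id.pow n).analyticOrderAt_eq_natCast.2
      ⟨fun _ => 1, analyticAt_const, one_ne_zero, Eventually.of_forall fun z => by simp⟩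
  · exact analyticOrderAt_eq_zero.2 (Or.inr (pow_ne_zero n h))

theorem AnalyticAt.exists_eventuallyEq_mul_of_analyticOrderAt_eq {𝕜 : Type*}
    [NontriviallyNormedField 𝕜] {f g : 𝕜 → 𝕜} {z₀ : 𝕜} (hf : AnalyticAt 𝕜 f z₀)
    (hg : AnalyticAt 𝕜 g z₀) (hfg : analyticOrderAt f z₀ = analyticOrderAt g z₀)
    (hg_top : analyticOrderAt g z₀ ≠ ⊤) :
    ∃ Φ : 𝕜 → 𝕜, AnalyticAt 𝕜 Φ z₀ ∧ Φ z₀ ≠ 0 ∧ f =ᶠ[𝓝 z₀] Φ * g := by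
  obtain ⟨n, hn⟩ := ENat.ne_top_iff_exists.1 hg_top
  obtain ⟨A, hA, hA0, hfA⟩ := hf.analyticOrderAt_eq_natCast.1 (hfg.trans hn.symm)
  obtain ⟨B, hB, hB0, hgB⟩ := hg.analyticOrderAt_eq_natCast.1 hn.symm
  refine ⟨A / B, hA.div hB hB0, div_ne_zero hA0 hB0, ?_⟩
  filter_upwards [hfA, hgB, hB.continuousAt.eventually_ne hB0] with w hfw hgw hBw
  simp only [Pi.mul_apply, Pi.div_apply, hfw, hgw, smul_eq_mul]
  field_simp

theorem eventuallyEq_diag_of_forall_mul_eq {α M : Type*} [TopologicalSpace α]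
    [MonoidWithZero M] [IsCancelMulZero M] {S W : α → M} {ψ : α → α → M}
    (hψ : ∀ z, ∀ᶠ w in 𝓝 z, ψ z w * S w = W w) {z₀ : α} (hS : ∀ᶠ w in 𝓝[≠] z₀, S w ≠ 0) :
    (fun z => ψ z z) =ᶠ[𝓝 z₀] ψ z₀ := by
  filter_upwards [hψ z₀, eventually_nhdsWithin_iff.1 hS] with w hw hSw
  rcases eq_or_ne w z₀ with rfl | hne
  · rfl
  · exact mul_right_cancel₀ (hSw hne) ((hψ w).self_of_nhds.trans hw.symm)

theorem eventually_nhdsNE_ne_zero {α M : Type*} [TopologicalSpace α] [PreconnectedSpace α]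
    [Zero M] {S : α → M}
    (hS : ∀ z, (∀ᶠ w in 𝓝 z, S w = 0) ∨ ∀ᶠ w in 𝓝[≠] z, S w ≠ 0) {z₁ : α} (hz₁ : S z₁ ≠ 0)
    (z : α) : ∀ᶠ w in 𝓝[≠] z, S w ≠ 0 := by
  set U := {z | ∀ᶠ w in 𝓝 z, S w = 0}
  have hU : IsClopen U := by
    refine ⟨isOpen_compl_iff.1 (isOpen_iff_mem_nhds.2 fun z hz => ?_),
      isOpen_setOfPred_eventually_nhds⟩
    filter_upwards [eventually_nhdsWithin_iff.1 ((hS z).resolve_left hz)] with w hw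
    rcases eq_or_ne w z with rfl | hne
    · exact hz
    · exact fun hwU => hw hne hwU.self_of_nhds
  have hU_empty : U = ∅ :=
    (isClopen_iff.1 hU).resolve_right fun h => hz₁ (h ▸ mem_univ z₁ : z₁ ∈ U).self_of_nhds
  have hz : z ∉ U := hU_empty ▸ notMem_empty z
  exact (hS z).resolve_left hz

noncomputable def dbar (f : ℂ → ℂ) (z : ℂ) : ℂ :=
  (fderiv ℝ f z 1 + I * fderiv ℝ f z I) / 2

theorem differentiableAt_complex_iff_dbar_eq_zero {f : ℂ → ℂ} {z : ℂ}
    (hf : DifferentiableAt ℝ f z) : DifferentiableAt ℂ f z ↔ dbar f z = 0 := by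
  rw [differentiableAt_complex_iff_differentiableAt_real, dbar, smul_eq_mul]
  constructor
  · rintro ⟨-, h⟩
    rw [h]
    linear_combination (fderiv ℝ f z 1 / 2) * I_mul_I
  · intro h
    exact ⟨hf, by linear_combination (-2 * I) * h + fderiv ℝ f z I * I_mul_I⟩

theorem dbar_mul {f g : ℂ → ℂ} {z : ℂ} (hf : DifferentiableAt ℝ f z)
    (hg : DifferentiableAt ℝ g z) :
    dbar (fun w => f w * g w) z = f z * dbar g z + g z * dbar f z := by
  simp only [dbar, fderiv_fun_mul hf hg, _root_.add_apply, _root_.smul_apply, smul_eq_mul]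
  ring

theorem dbar_inv {g : ℂ → ℂ} {z : ℂ} (hg : DifferentiableAt ℝ g z) (hz : g z ≠ 0) :
    dbar (fun w => (g w)⁻¹) z = -dbar g z / g z ^ 2 := by
  have h := (hasFDerivAt_inv' (𝕜 := ℝ) hz).comp z hg.hasFDerivAt
  simp only [dbar, Function.comp_def] at h ⊢
  rw [h.fderiv]
  simp only [ContinuousLinearMap.neg_comp, _root_.neg_apply, ContinuousLinearMap.comp_apply,
    ContinuousLinearMap.mulLeftRight_apply]
  ring

theorem dbar_div {f g : ℂ → ℂ} {z : ℂ} (hf : DifferentiableAt ℝ f z)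
    (hg : DifferentiableAt ℝ g z) (hz : g z ≠ 0) :
    dbar (fun w => f w / g w) z = (g z * dbar f z - f z * dbar g z) / g z ^ 2 := by
  simp only [div_eq_mul_inv]
  rw [dbar_mul hf (hg.fun_inv hz), dbar_inv hg hz]
  field_simp
  ring

theorem dbar_sum {ι : Type*} (s : Finset ι) (c : ι → ℂ) {f : ι → ℂ → ℂ} {z : ℂ}
    (hf : ∀ i ∈ s, DifferentiableAt ℝ (f i) z) :
    dbar (fun w => ∑ i ∈ s, c i * f i w) z = ∑ i ∈ s, c i * dbar (f i) z := by
  have hd : ∀ i ∈ s, DifferentiableAt ℝ (fun w => c i * f i w) z := fun i hi =>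
    (hf i hi).const_mul _
  rw [dbar, fderiv_fun_sum hd, _root_.sum_apply, _root_.sum_apply, Finset.mul_sum,
    ← Finset.sum_add_distrib, Finset.sum_div]
  refine Finset.sum_congr rfl fun i hi => ?_
  rw [fderiv_const_mul (hf i hi), dbar]
  simp only [_root_.smul_apply, smul_eq_mul]
  ring

theorem dbar_eq_mul_of_dbar_mul_eq_zero {c f : ℂ → ℂ} {z : ℂ} (hc : DifferentiableAt ℝ c z)
    (hf : DifferentiableAt ℝ f z) (hc0 : c z ≠ 0) (h : dbar (fun w => c w * f w) z = 0) :
    dbar f z = -(dbar c z / c z) * f z := by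
  rw [dbar_mul hc hf] at h
  field_simp
  linear_combination h

theorem analyticAt_div_of_dbar_eq_mul {f g k : ℂ → ℂ} (hf : Differentiable ℝ f)
    (hg : Differentiable ℝ g) (hfk : ∀ z, dbar f z = k z * f z)
    (hgk : ∀ z, dbar g z = k z * g z) {z₀ : ℂ} (hz₀ : g z₀ ≠ 0) :
    AnalyticAt ℂ (fun z => f z / g z) z₀ := by
  refine DifferentiableOn.analyticAt (s := {z | g z ≠ 0}) (fun z hz => ?_)
    ((isOpen_ne_fun hg.continuous continuous_const).mem_nhds hz₀)
  refine ((differentiableAt_complex_iff_dbar_eq_zero ((hf z).div_normedField (hg z) hz)).2 ?_)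
    |>.differentiableWithinAt
  rw [dbar_div (hf z) (hg z) hz, hfk, hgk]
  ring

theorem vpdm_equivRealProd {N : ℕ} (x : ℝ × ℝ → Fin N → ℂ) (z : ℂ) (i : Fin N) :
    vpdm x (equivRealProdCLM z) i = dbar (fun w => x (equivRealProdCLM w) i) z := by
  rw [dbar, show (fun w => x (equivRealProdCLM w) i) = (fun q => x q i) ∘ equivRealProdCLM
    from rfl, equivRealProdCLM.comp_right_fderiv]
  simp only [vpdm, vpd1, vpd2, one_div, equivRealProdCLM_apply, Pi.smul_apply, Pi.add_apply,
    smul_eq_mul, ContinuousLinearMap.comp_apply, ContinuousLinearEquiv.coe_coe, one_re, one_im,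
    I_re, I_im]
  ring

/-- Weierstrass's elementary factor `E_p(w) = (1 - w) exp (w + w² / 2 + ⋯ + w ^ p)`. -/
noncomputable def weierstrassFactor (p : ℕ) (w : ℂ) : ℂ :=
  (1 - w) * exp (-logTaylor (p + 1) (-w))

noncomputable def logWeierstrassFactor (p : ℕ) (w : ℂ) : ℂ :=
  log (1 - w) - logTaylor (p + 1) (-w)

theorem weierstrassFactor_eq_exp {p : ℕ} {w : ℂ} (hw : ‖w‖ < 1) :
    weierstrassFactor p w = exp (logWeierstrassFactor p w) := by
  have h : 1 - w ≠ 0 := fun h => by simp [← sub_eq_zero.mp h] at hw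
  rw [logWeierstrassFactor, sub_eq_add_neg, exp_add, exp_log h, weierstrassFactor]

theorem norm_logWeierstrassFactor_le {p : ℕ} {w : ℂ} (hw : ‖w‖ ≤ 1 / 2) :
    ‖logWeierstrassFactor p w‖ ≤ (1 / 2) ^ p := by
  have h := norm_log_sub_logTaylor_le p (z := -w) (by rw [norm_neg]; linarith)
  rw [← sub_eq_add_neg, norm_neg] at h
  refine h.trans ?_
  have h2 : (1 - ‖w‖)⁻¹ ≤ 2 := by
    rw [inv_le_comm₀ (by linarith) two_pos]; linarith
  have h3 : 0 ≤ (1 - ‖w‖)⁻¹ := inv_nonneg.2 (by linarith)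
  calc ‖w‖ ^ (p + 1) * (1 - ‖w‖)⁻¹ / (p + 1)
      ≤ (1 / 2) ^ (p + 1) * 2 / 1 := by gcongr; linarith
    _ = (1 / 2) ^ p := by ring

theorem differentiableAt_logTaylor_neg (n : ℕ) (w : ℂ) :
    DifferentiableAt ℂ (fun w => logTaylor n (-w)) w := by
  cases n with
  | zero => simp [logTaylor_zero]
  | succ p => exact (hasDerivAt_logTaylor p (-w)).differentiableAt.comp w differentiableAt_id.neg

theorem differentiable_weierstrassFactor (p : ℕ) : Differentiable ℂ (weierstrassFactor p) :=
  ((differentiable_const 1).sub differentiable_id).mul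
    fun w => (differentiableAt_logTaylor_neg (p + 1) w).neg.cexp

theorem differentiableOn_logWeierstrassFactor (p : ℕ) :
    DifferentiableOn ℂ (logWeierstrassFactor p) (ball 0 1) := fun w hw => by
  have hw : ‖-w‖ < 1 := by simpa using hw
  have hlog : DifferentiableAt ℂ (fun w : ℂ => log (1 - w)) w :=
    (differentiableAt_log (by simpa [sub_eq_add_neg] using mem_slitPlane_of_norm_lt_one hw)).comp
      w ((differentiableAt_const 1).sub differentiableAt_id)
  exact (hlog.sub (differentiableAt_logTaylor_neg (p + 1) w)).differentiableWithinAt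

theorem analyticOrderAt_weierstrassFactor_div (p : ℕ) {a : ℂ} (ha : a ≠ 0) (z₀ : ℂ) :
    analyticOrderAt (fun z => weierstrassFactor p (z / a)) z₀ = if a = z₀ then 1 else 0 := by
  set u : ℂ → ℂ := fun z => -a⁻¹ * exp (-logTaylor (p + 1) (-(z / a)))
  have hE : ∀ z, weierstrassFactor p (z / a) = (z - a) * u z := fun z => by
    simp only [weierstrassFactor, u]; field_simp; ring
  have hu0 : ∀ z, u z ≠ 0 := fun z => mul_ne_zero (by simpa using ha) (exp_ne_zero _)
  have hE_an : AnalyticAt ℂ (fun z => weierstrassFactor p (z / a)) z₀ :=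
    ((differentiable_weierstrassFactor p).comp (differentiable_id.div_const a)).analyticAt z₀
  have hu : Differentiable ℂ u := fun z =>
    (((differentiableAt_logTaylor_neg (p + 1) (z / a)).comp z
      (differentiableAt_id.div_const a)).neg.cexp.const_mul _)
  split_ifs with h
  · subst h
    exact_mod_cast hE_an.analyticOrderAt_eq_natCast.2
      ⟨u, hu.analyticAt a, hu0 a, Eventually.of_forall fun z => by simp [hE]⟩
  · rw [analyticOrderAt_eq_zero]
    exact Or.inr (by rw [hE]; exact mul_ne_zero (sub_ne_zero.2 (Ne.symm h)) (hu0 z₀))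

section CanonicalProduct

open Encodable

variable {ι : Type*} [Encodable ι] (a : ι → ℂ)

/-- The exponent `encode i` of the `i`-th factor makes the logarithms of the factors with
`‖z / a i‖ ≤ 1 / 2` summable against the geometric series `(1 / 2) ^ encode i`. -/
noncomputable def canonicalProduct (z : ℂ) : ℂ :=
  ∏' i, weierstrassFactor (encode i) (z / a i)

theorem summable_half_pow_encode (s : Set ι) :
    Summable fun i : s => (1 / 2 : ℝ) ^ encode i.1 :=
  (summable_geometric_of_lt_one (by norm_num) (by norm_num)).comp_injective
    (encode_injective.comp Subtype.val_injective)

theorem canonicalProduct_eq_prod_mul_exp (F : Finset ι) {z : ℂ}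
    (hz : ∀ i ∉ F, ‖z / a i‖ ≤ 1 / 2) :
    canonicalProduct a z = (∏ i ∈ F, weierstrassFactor (encode i) (z / a i)) *
      exp (∑' i : ↥(F : Set ι)ᶜ, logWeierstrassFactor (encode i.1) (z / a i)) := by
  have hsum : Summable fun i : ↥(F : Set ι)ᶜ => logWeierstrassFactor (encode i.1) (z / a i) :=
    (summable_half_pow_encode _).of_norm_bounded fun i => norm_logWeierstrassFactor_le (hz i i.2)
  have htail : HasProd (fun i : ↥(F : Set ι)ᶜ => weierstrassFactor (encode i.1) (z / a i))
      (exp (∑' i : ↥(F : Set ι)ᶜ, logWeierstrassFactor (encode i.1) (z / a i))) := by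
    refine (hsum.hasSum.cexp).congr_fun fun i => ?_
    exact weierstrassFactor_eq_exp ((hz i i.2).trans_lt (by norm_num))
  rw [canonicalProduct,
    ((F.hasProd fun i => weierstrassFactor (encode i) (z / a i)).mul_compl htail).tprod_eq]

theorem canonicalProduct_eventuallyEq (hfin : ∀ R, {i | ‖a i‖ ≤ R}.Finite) (z₀ : ℂ) :
    ∃ F : Finset ι, (∀ i, a i = z₀ → i ∈ F) ∧ ∃ T : ℂ → ℂ, AnalyticAt ℂ T z₀ ∧
      canonicalProduct a =ᶠ[𝓝 z₀]
        fun z => (∏ i ∈ F, weierstrassFactor (encode i) (z / a i)) * exp (T z) := by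
  set R := ‖z₀‖ + 1
  set F := (hfin (2 * R)).toFinset
  have hsmall : ∀ z ∈ ball (0 : ℂ) R, ∀ i ∉ F, ‖z / a i‖ < 1 / 2 := fun z hz i hi => by
    rw [mem_ball_zero_iff] at hz
    have hi : 2 * R < ‖a i‖ := by simpa [F] using hi
    rw [norm_div, div_lt_iff₀ (by linarith [norm_nonneg z])]
    linarith
  have hz₀ : ball (0 : ℂ) R ∈ 𝓝 z₀ := isOpen_ball.mem_nhds (by simp [R])
  have hF : ∀ i, a i = z₀ → i ∈ F := fun i hi => by
    simp only [F, Finite.mem_toFinset, mem_ofPred_eq, hi, R]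
    linarith [norm_nonneg z₀]
  refine ⟨F, hF, _, ?_, eventually_of_mem hz₀ fun z hz =>
    canonicalProduct_eq_prod_mul_exp a F fun i hi => (hsmall z hz i hi).le⟩
  refine DifferentiableOn.analyticAt ?_ hz₀
  refine differentiableOn_tsum_of_summable_norm (summable_half_pow_encode _) (fun i => ?_)
    isOpen_ball fun i z hz => norm_logWeierstrassFactor_le (hsmall z hz i i.2).le
  refine (differentiableOn_logWeierstrassFactor _).comp (differentiableOn_id.div_const _)
    fun z hz => ?_
  simpa using (hsmall z hz i i.2).trans (by norm_num : (1 / 2 : ℝ) < 1)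

theorem differentiable_canonicalProduct (hfin : ∀ R, {i | ‖a i‖ ≤ R}.Finite) :
    Differentiable ℂ (canonicalProduct a) := fun z₀ => by
  obtain ⟨F, -, T, hT, hP⟩ := canonicalProduct_eventuallyEq a hfin z₀
  refine hP.differentiableAt_iff.2 ((DifferentiableAt.fun_finsetProd fun i _ => ?_).mul
    hT.differentiableAt.cexp)
  exact (differentiable_weierstrassFactor _).comp (differentiable_id.div_const _) z₀

theorem analyticOrderAt_canonicalProduct (hfin : ∀ R, {i | ‖a i‖ ≤ R}.Finite)
    (ha : ∀ i, a i ≠ 0) (z₀ : ℂ) :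
    analyticOrderAt (canonicalProduct a) z₀ = {i | a i = z₀}.ncard := by
  classical
  obtain ⟨F, hF, T, hT, hP⟩ := canonicalProduct_eventuallyEq a hfin z₀
  have hE : ∀ i ∈ F, AnalyticAt ℂ (fun z => weierstrassFactor (encode i) (z / a i)) z₀ :=
    fun i _ =>
      ((differentiable_weierstrassFactor _).comp (differentiable_id.div_const _)).analyticAt z₀
  have hexp : analyticOrderAt (fun z => exp (T z)) z₀ = 0 :=
    analyticOrderAt_eq_zero.2 (Or.inr (exp_ne_zero _))
  have hfiber : {i | a i = z₀} = ↑(F.filter fun i => a i = z₀) := by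
    ext i; simpa using fun h => hF i h
  rw [analyticOrderAt_congr hP, ← Pi.mul_def, analyticOrderAt_mul (F.analyticAt_fun_prod hE)
    (g := fun z => exp (T z)) hT.cexp, hexp, add_zero, analyticOrderAt_finsetProd hE, hfiber,
    Set.ncard_coe_finset]
  simp_rw [analyticOrderAt_weierstrassFactor_div _ (ha _)]
  simp

end CanonicalProduct

/-- Each zero `z ≠ 0` of multiplicity `D z` is listed as `(z, 0), …, (z, D z - 1)`; the zero at
the origin is supplied separately, by a factor `z ^ D 0`. -/
def zerosWithMultiplicity (D : ℂ → ℕ) : Set (ℂ × ℕ) := {q | q.1 ≠ 0 ∧ q.2 < D q.1}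

section Divisor

variable {D : ℂ → ℕ}

theorem finite_zerosWithMultiplicity_norm_le (hD : ∀ᶠ z in codiscrete ℂ, D z = 0) (R : ℝ) :
    {q ∈ zerosWithMultiplicity D | ‖q.1‖ ≤ R}.Finite := by
  have hK : (closedBall (0 : ℂ) R \ {z | D z = 0}).Finite :=
    (isCompact_closedBall 0 R).finite_sdiff_of_mem_codiscreteWithin
      (codiscreteWithin_mono (subset_univ _) hD)
  refine (hK.biUnion fun z _ => (finite_singleton z).prod (finite_Iio (D z))).subset ?_
  rintro ⟨z, j⟩ ⟨⟨-, hj⟩, hz⟩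
  exact mem_biUnion (x := z) ⟨by simpa using hz, fun h : D z = 0 => by simp [h] at hj⟩ ⟨rfl, hj⟩

theorem countable_zerosWithMultiplicity (hD : ∀ᶠ z in codiscrete ℂ, D z = 0) :
    (zerosWithMultiplicity D).Countable := by
  refine (countable_iUnion fun n : ℕ => (finite_zerosWithMultiplicity_norm_le hD n).countable).mono
    fun q hq => mem_iUnion.2 ?_
  obtain ⟨n, hn⟩ := exists_nat_ge ‖q.1‖
  exact ⟨n, hq, hn⟩

theorem ncard_zerosWithMultiplicity_fst_eq (z₀ : ℂ) :
    {q : zerosWithMultiplicity D | q.1.1 = z₀}.ncard = if z₀ = 0 then 0 else D z₀ := by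
  split_ifs with h
  · subst h
    convert ncard_empty (zerosWithMultiplicity D)
    exact eq_empty_of_forall_notMem fun q hq => q.2.1 hq
  · rw [← Finset.card_range (D z₀), ← ncard_coe_finset]
    refine ncard_congr (fun q _ => q.1.2) (fun q hq => ?_) (fun q r hq hr hqr => ?_)
      fun j hj => ⟨⟨(z₀, j), h, by simpa using hj⟩, rfl, rfl⟩
    · have hq : q.1.1 = z₀ := hq
      simpa [← hq] using q.2.2
    · exact Subtype.ext (Prod.ext ((hq : q.1.1 = z₀).trans (hr : r.1.1 = z₀).symm) hqr)

theorem exists_differentiable_analyticOrderAt_eq (hD : ∀ᶠ z in codiscrete ℂ, D z = 0) :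
    ∃ W : ℂ → ℂ, Differentiable ℂ W ∧ ∀ z, analyticOrderAt W z = D z := by
  have := (countable_zerosWithMultiplicity hD).to_subtype
  let := Encodable.ofCountable (zerosWithMultiplicity D)
  set a : zerosWithMultiplicity D → ℂ := fun q => q.1.1
  have hfin : ∀ R, {q | ‖a q‖ ≤ R}.Finite := fun R =>
    ((finite_zerosWithMultiplicity_norm_le hD R).preimage Subtype.val_injective.injOn).subset
      fun q hq => ⟨q.2, hq⟩
  have hP := differentiable_canonicalProduct a hfin
  refine ⟨fun z => z ^ D 0 * canonicalProduct a z, (differentiable_id.pow _).mul hP,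
    fun z₀ => ?_⟩
  have hpow : AnalyticAt ℂ (fun z : ℂ => z ^ D 0) z₀ := analyticAt_id.pow _
  change analyticOrderAt ((fun z : ℂ => z ^ D 0) * canonicalProduct a) z₀ = D z₀
  rw [analyticOrderAt_mul hpow (hP.analyticAt z₀), analyticOrderAt_pow_id,
    analyticOrderAt_canonicalProduct a hfin (fun q => q.2.1), ncard_zerosWithMultiplicity_fst_eq]
  split_ifs with h <;> simp [h]

end Divisor

theorem exists_eventuallyEq_analytic_div (S : ℂ → ℂ) (d : ℂ → ℂ → ℂ)
    (hd : ∀ z, ContinuousAt (d z) z) (hd0 : ∀ z, d z z ≠ 0)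
    (hS : ∀ z, AnalyticAt ℂ (fun w => S w / d z w) z) {z₁ : ℂ} (hz₁ : S z₁ ≠ 0) :
    ∃ γ : ℂ → ℂ, ∀ z, ∃ Φ : ℂ → ℂ, AnalyticAt ℂ Φ z ∧ Φ z ≠ 0 ∧
      γ =ᶠ[𝓝 z] fun w => Φ w / d z w := by
  set H : ℂ → ℂ → ℂ := fun z w => S w / d z w
  replace hS : ∀ z, AnalyticAt ℂ (H z) z := hS
  have hd_ne : ∀ z, ∀ᶠ w in 𝓝 z, d z w ≠ 0 := fun z => (hd z).eventually_ne (hd0 z)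
  have hSH : ∀ z, ∀ᶠ w in 𝓝 z, S w = H z w * d z w := fun z => by
    filter_upwards [hd_ne z] with w hw using (div_mul_cancel₀ _ hw).symm
  have hS_ne : ∀ z, ∀ᶠ w in 𝓝[≠] z, S w ≠ 0 := by
    refine eventually_nhdsNE_ne_zero (fun z => ?_) hz₁
    refine (hS z).eventually_eq_zero_or_eventually_ne_zero.imp (fun h => ?_) fun h => ?_
    · filter_upwards [hSH z, h] with w h1 h2
      rw [h1, h2, zero_mul]
    · filter_upwards [nhdsWithin_le_nhds (hSH z), nhdsWithin_le_nhds (hd_ne z), h]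
        with w h1 h2 h3
      rw [h1]
      exact mul_ne_zero h3 h2
  have hH_top : ∀ z, analyticOrderAt (H z) z ≠ ⊤ := fun z h => by
    obtain ⟨w, hwH, hwS, hwSH⟩ := ((eventually_nhdsWithin_of_eventually_nhds
      (analyticOrderAt_eq_top.1 h)).and ((hS_ne z).and (nhdsWithin_le_nhds (hSH z)))).exists
    exact hwS (by rw [hwSH, hwH, zero_mul])
  set D : ℂ → ℕ := fun z => (analyticOrderAt (H z) z).toNat
  have hD : ∀ᶠ z in codiscrete ℂ, D z = 0 := by
    refine mem_codiscrete.2 fun z => disjoint_principal_right.2 ?_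
    filter_upwards [hS_ne z] with w hw
    have h0 : analyticOrderAt (H w) w = 0 :=
      analyticOrderAt_eq_zero.2 (Or.inr (div_ne_zero hw (hd0 w)))
    simp [D, h0]
  obtain ⟨W, hW, hWD⟩ := exists_differentiable_analyticOrderAt_eq hD
  choose Φ hΦ hΦ0 hWΦ using fun z =>
    (hW.analyticAt z).exists_eventuallyEq_mul_of_analyticOrderAt_eq (hS z)
      (by rw [hWD, ENat.natCast_toNat (hH_top z)]) (hH_top z)
  -- Near `z`, `W = Φ z * S / d z`, so `γ = W / S` away from the zeros of `S`.
  refine ⟨fun z => Φ z z / d z z, fun z => ⟨Φ z, hΦ z, hΦ0 z,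
    eventuallyEq_diag_of_forall_mul_eq (S := S) (W := W) (ψ := fun z w => Φ z w / d z w)
      (fun z => ?_) (hS_ne z)⟩⟩
  filter_upwards [hSH z, hWΦ z, hd_ne z] with w hSw hWw hdw
  rw [hSw, hWw, Pi.mul_apply]
  field_simp

theorem exists_differentiable_mul_of_dbar_eq_mul {ι : Type*} [Fintype ι] (X : ι → ℂ → ℂ)
    (k : ℂ → ℂ) (hX : ∀ i, Differentiable ℝ (X i)) (hX0 : ∀ z, ∃ i, X i z ≠ 0)
    (hk : ∀ i z, dbar (X i) z = k z * X i z) :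
    ∃ γ : ℂ → ℂ, Differentiable ℝ γ ∧ (∀ z, γ z ≠ 0) ∧
      ∀ i, Differentiable ℂ fun z => γ z * X i z := by
  choose J hJ using hX0
  set S : ℂ → ℂ := fun z => ∑ i, starRingEnd ℂ (X i 0) * X i z
  have hS : Differentiable ℝ S := fun z =>
    DifferentiableAt.fun_sum fun i _ => (hX i z).const_mul _
  have hSk : ∀ z, dbar S z = k z * S z := fun z => by
    rw [dbar_sum _ _ fun i _ => hX i z, Finset.mul_sum]
    exact Finset.sum_congr rfl fun i _ => by rw [hk]; ring
  have hS0 : S 0 ≠ 0 := by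
    have h : S 0 = ((∑ i, ‖X i 0‖ ^ 2 : ℝ) : ℂ) := by
      simp [S, conj_mul']
    rw [h, ofReal_ne_zero]
    exact (Finset.sum_pos' (fun i _ => by positivity)
      ⟨J 0, Finset.mem_univ _, pow_pos (norm_pos_iff.2 (hJ 0)) 2⟩).ne'
  obtain ⟨γ, hγ⟩ := exists_eventuallyEq_analytic_div S (fun z => X (J z))
    (fun z => (hX _).continuous.continuousAt) hJ
    (fun z => analyticAt_div_of_dbar_eq_mul hS (hX _) hSk (hk _) (hJ z)) hS0
  choose Φ hΦ hΦ0 hγΦ using hγ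
  refine ⟨γ, fun z => ?_, fun z => ?_, fun i z => ?_⟩
  · exact (hγΦ z).differentiableAt_iff.2
      (((hΦ z).differentiableAt.restrictScalars ℝ).div_normedField (hX _ z) (hJ z))
  · rw [(hγΦ z).self_of_nhds]
    exact div_ne_zero (hΦ0 z) (hJ z)
  · have h : (fun w => γ w * X i w) =ᶠ[𝓝 z] fun w => Φ z w * (X i w / X (J z) w) := by
      filter_upwards [hγΦ z] with w hw
      rw [hw]
      ring
    exact h.differentiableAt_iff.2 ((hΦ z).mul
      (analyticAt_div_of_dbar_eq_mul (hX i) (hX _) (hk i) (hk _) (hJ z))).differentiableAt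

/-- A differentiable nonvanishing vector family `x` is holomorphic up to scaling
(there is a nonvanishing differentiable scalar `c` with `∂₋(c x) = 0`) iff `∂₋x` is
pointwise proportional to `x`. -/
theorem holomorphic_iff_proportional {N : ℕ} (x : ℝ × ℝ → Fin N → ℂ)
    (hdiff : ∀ i, Differentiable ℝ fun q => x q i)
    (hx : ∀ p, x p ≠ 0) :
    (∃ c : ℝ × ℝ → ℂ, Differentiable ℝ c ∧ (∀ p, c p ≠ 0) ∧
        ∀ p, vpdm (fun q => c q • x q) p = 0) ↔
      ∀ p, ∃ k : ℂ, vpdm x p = k • x p := by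
  set e := equivRealProdCLM
  constructor
  · rintro ⟨c, hc, hc0, hcx⟩ p
    obtain ⟨z, rfl⟩ := e.surjective p
    refine ⟨-(dbar (fun w => c (e w)) z / c (e z)), funext fun i => ?_⟩
    have h := congrFun (hcx (e z)) i
    rw [vpdm_equivRealProd] at h ⊢
    exact dbar_eq_mul_of_dbar_mul_eq_zero ((hc _).comp z e.differentiableAt)
      ((hdiff i _).comp z e.differentiableAt) (hc0 _) h
  · intro hk
    choose k hk using hk
    obtain ⟨γ, hγ, hγ0, hγX⟩ := exists_differentiable_mul_of_dbar_eq_mul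
      (fun i z => x (e z) i) (fun z => k (e z)) (fun i => (hdiff i).comp e.differentiable)
      (fun z => Function.ne_iff.1 (hx (e z)))
      (fun i z => by rw [← vpdm_equivRealProd, hk]; rfl)
    refine ⟨fun p => γ (e.symm p), hγ.comp e.symm.differentiable, fun p => hγ0 _,
      fun p => funext fun i => ?_⟩
    obtain ⟨z, rfl⟩ := e.surjective p
    rw [vpdm_equivRealProd]
    exact (differentiableAt_complex_iff_dbar_eq_zero ((hγX i z).restrictScalars ℝ)).1 (hγX i z)
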